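/- arXiv:1907.04729 — 4 statements merged into one kernel-verified Lean document; each statement's English description precedes it below -/
import Mathlib

section
/- Let n and r be odd natural numbers with 3 ≤ r < n, and suppose the 2-adic valuation of C(n-1, r-1) is strictly less than that of C(n-2, r-1). Then the 2-adic valuation of n-1 equals the 2-adic valuation of r-1. -/
theorem stmt_7 (n r : ℕ) (hn : Odd n) (hr : Odd r) (h3 : 3 ≤ r) (hrn : r < n)
    (hval : padicValNat 2 (Nat.choose (n - 1) (r - 1)) <
      padicValNat 2 (Nat.choose (n - 2) (r - 1))) :
    padicValNat 2 (n - 1) = padicValNat 2 (r - 1) := by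
  haveI : Fact (Nat.Prime 2) := ⟨Nat.prime_two⟩
  set a := n - 1 with ha
  set b := r - 1 with hb
  -- basic facts
  have hr1 : 1 ≤ r := by omega
  have hn1 : 1 ≤ n := by omega
  have hrn2 : r ≤ n - 2 := by
    -- both odd, r < n
    rcases hn with ⟨k, hk⟩; rcases hr with ⟨m, hm⟩; omega
  have hba : b + 1 ≤ a := by omega
  have hbA : b ≤ a - 1 := by omega
  have hapos : 0 < a := by omega
  have hbpos : 0 < b := by omega
  have habpos : 0 < a - b := by omega
  -- key identity : a * C(a-1, b) = C(a, b) * (a - b)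
  have key : a * Nat.choose (a - 1) b = Nat.choose a b * (a - b) := by
    have h1 := Nat.add_one_mul_choose_eq (a - 1) b
    have h2 := Nat.choose_succ_right_eq a b
    have ha1 : a - 1 + 1 = a := by omega
    rw [ha1] at h1
    -- h1 : a * choose (a-1) b = choose a (b+1) * (b+1)
    -- h2 : choose a (b+1) * (b+1) = choose a b * (a - b)
    rw [h1, h2]
  have hC1 : Nat.choose a b ≠ 0 := (Nat.choose_pos (by omega : b ≤ a)).ne'
  have hC2 : Nat.choose (a - 1) b ≠ 0 := (Nat.choose_pos hbA).ne'
  have hn2 : n - 2 = a - 1 := by omega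
  rw [hn2] at hval
  -- take valuations
  have hv : padicValNat 2 a + padicValNat 2 (Nat.choose (a - 1) b) =
      padicValNat 2 (Nat.choose a b) + padicValNat 2 (a - b) := by
    have := congrArg (padicValNat 2) key
    rwa [padicValNat.mul (by omega) hC2, padicValNat.mul hC1 (by omega)] at this
  have hgt : padicValNat 2 a < padicValNat 2 (a - b) := by omega
  set k := padicValNat 2 a with hk
  have hdvd_a : (2:ℕ) ^ k ∣ a := pow_padicValNat_dvd
  have hndvd_a : ¬ (2:ℕ) ^ (k + 1) ∣ a := by
    rw [padicValNat_dvd_iff_le (by omega)]; omega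
  have hdvd_ab : (2:ℕ) ^ (k + 1) ∣ a - b := by
    rw [padicValNat_dvd_iff_le (by omega)]; omega
  have hdvd_b : (2:ℕ) ^ k ∣ b := by
    have : b = a - (a - b) := by omega
    rw [this]
    exact Nat.dvd_sub hdvd_a (dvd_trans (pow_dvd_pow 2 (by omega)) hdvd_ab)
  have hndvd_b : ¬ (2:ℕ) ^ (k + 1) ∣ b := by
    intro h
    apply hndvd_a
    have : a = (a - b) + b := by omega
    rw [this]
    exact Nat.dvd_add hdvd_ab h
  have h1 : k ≤ padicValNat 2 b := (padicValNat_dvd_iff_le (by omega)).mp hdvd_b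
  have h2 : padicValNat 2 b < k + 1 := by
    by_contra h
    exact hndvd_b ((padicValNat_dvd_iff_le (by omega)).mpr (by omega))
  omega
end

section
/- For every natural number n with n ≡ 11 (mod 16): n is odd, α₂(n-1) = α₂(6) = 1, and C(n-1, 6) ≡ 2 (mod 4). -/
lemma per16 (m : ℕ) : (m + 16).choose 6 % 4 = m.choose 6 % 4 := by
  rw [Nat.add_choose_eq]
  rw [Finset.Nat.sum_antidiagonal_eq_sum_range_succ_mk]
  simp [Finset.sum_range_succ]
  norm_num [Nat.choose]
  omega

lemma key (k : ℕ) : (16 * k + 10).choose 6 % 4 = 2 := by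
  induction k with
  | zero => decide
  | succ k ih =>
    have : 16 * (k + 1) + 10 = (16 * k + 10) + 16 := by ring
    rw [this, per16, ih]

theorem stmt_12 (n : ℕ) (hn : n % 16 = 11) :
    Odd n ∧ padicValNat 2 (n - 1) = padicValNat 2 6 ∧ padicValNat 2 (n - 1) = 1 ∧
      Nat.choose (n - 1) 6 % 4 = 2 := by
  obtain ⟨k, hk⟩ : ∃ k, n = 16 * k + 11 := ⟨n / 16, by omega⟩
  subst hk
  have h1 : 16 * k + 11 - 1 = 2 * (8 * k + 5) := by omega
  haveI : Fact (Nat.Prime 2) := ⟨Nat.prime_two⟩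
  have hv : padicValNat 2 (16 * k + 11 - 1) = 1 := by
    rw [h1, padicValNat.mul (by norm_num) (by omega), padicValNat.self (by norm_num),
      padicValNat.eq_zero_of_not_dvd (by omega)]
  refine ⟨⟨8 * k + 5, by ring⟩, ?_, hv, ?_⟩
  · rw [hv]; rw [show (6:ℕ) = 2 * 3 by norm_num, padicValNat.mul (by norm_num) (by norm_num), padicValNat.self (by norm_num), padicValNat.eq_zero_of_not_dvd (by norm_num)]
  · have : 16 * k + 11 - 1 = 16 * k + 10 := by omega
    rw [this]; exact key k
end

section
/- For k ≥ 4, let n = (2^{k-1}+1)·2^{k+2} + 3 and r = 2^{k+3} + 3. Then the 2-adic valuation of C(n-1, r-1) is exactly k−2. -/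
theorem stmt_13 (k n r : ℕ) (hk : 4 ≤ k)
    (hn : n = (2 ^ (k - 1) + 1) * 2 ^ (k + 2) + 3) (hr : r = 2 ^ (k + 3) + 3) :
    padicValNat 2 (Nat.choose (n - 1) (r - 1)) = k - 2 := by
  obtain ⟨j, rfl⟩ : ∃ j, k = j + 4 := ⟨k - 4, by omega⟩
  subst hn hr
  show padicValNat 2
      (Nat.choose ((2 ^ (j + 3) + 1) * 2 ^ (j + 6) + 3 - 1) (2 ^ (j + 7) + 3 - 1)) = j + 2
  have e1 : 2 ^ (j + 3) * 2 ^ (j + 6) = 2 ^ (2 * j + 9) := by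
    rw [← pow_add]; congr 1; ring
  have e2 : 2 ^ (j + 7) = 2 * 2 ^ (j + 6) := by rw [← pow_succ']
  have e3 : 2 ^ (j + 8) = 2 * 2 ^ (j + 7) := by rw [← pow_succ']
  have e4 : 2 ^ (2 * j + 10) = 2 * 2 ^ (2 * j + 9) := by rw [← pow_succ']
  have h79 : 2 ^ (j + 7) ≤ 2 ^ (2 * j + 9) := Nat.pow_le_pow_right (by norm_num) (by omega)
  have h2lt6 : (2:ℕ) < 2 ^ (j + 6) := by
    calc (2:ℕ) < 2 ^ 2 := by norm_num
    _ ≤ 2 ^ (j + 6) := Nat.pow_le_pow_right (by norm_num) (by omega)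
  have hchoose : (2 ^ (j + 3) + 1) * 2 ^ (j + 6) + 3 - 1
      = 2 ^ (2 * j + 9) + 2 ^ (j + 6) + 2 := by
    rw [add_mul, one_mul, e1]
    omega
  have hr1 : 2 ^ (j + 7) + 3 - 1 = 2 ^ (j + 7) + 2 := by omega
  rw [hchoose, hr1]
  have hRN : 2 ^ (j + 7) + 2 ≤ 2 ^ (2 * j + 9) + 2 ^ (j + 6) + 2 := by omega
  have hNR : 2 ^ (2 * j + 9) + 2 ^ (j + 6) + 2 - (2 ^ (j + 7) + 2)
      = 2 ^ (2 * j + 9) - 2 ^ (j + 6) := by omega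
  have hlog : Nat.log 2 (2 ^ (2 * j + 9) + 2 ^ (j + 6) + 2) < 2 * j + 10 :=
    Nat.log_lt_of_lt_pow (by positivity) (by omega)
  haveI : Fact (Nat.Prime 2) := ⟨Nat.prime_two⟩
  rw [padicValNat_choose (p := 2) hRN hlog]
  have hfilter : ((Finset.Ico 1 (2 * j + 10)).filter
      fun i => 2 ^ i ≤ (2 ^ (j + 7) + 2) % 2 ^ i
        + (2 ^ (2 * j + 9) + 2 ^ (j + 6) + 2 - (2 ^ (j + 7) + 2)) % 2 ^ i)
      = Finset.Ico (j + 8) (2 * j + 10) := by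
    ext i
    simp only [Finset.mem_filter, Finset.mem_Ico]
    rw [hNR]
    constructor
    · rintro ⟨⟨hi1, hi2⟩, hcond⟩
      refine ⟨?_, hi2⟩
      by_contra hlt
      push_neg at hlt
      have hile : i ≤ j + 7 := by omega
      have hipos : (0:ℕ) < 2 ^ i := pow_pos (by norm_num) _
      have hsmod : (2 ^ (j + 7) + 2) % 2 ^ i = 2 % 2 ^ i := by
        have hdec : 2 ^ (j + 7) + 2 = 2 ^ i * 2 ^ (j + 7 - i) + 2 := by
          rw [← pow_add]
          congr 2
          omega
        rw [hdec, Nat.mul_add_mod]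
      rcases Nat.lt_or_ge i (j + 7) with hi6 | hi7
      · -- i ≤ j + 6 : the big part is divisible by 2 ^ i
        have hdvd : 2 ^ i ∣ 2 ^ (2 * j + 9) - 2 ^ (j + 6) :=
          Nat.dvd_sub (pow_dvd_pow 2 (by omega)) (pow_dvd_pow 2 (by omega))
        have hmmod : (2 ^ (2 * j + 9) - 2 ^ (j + 6)) % 2 ^ i = 0 :=
          Nat.mod_eq_zero_of_dvd hdvd
        rw [hsmod, hmmod] at hcond
        have := Nat.mod_lt 2 hipos
        omega
      · -- i = j + 7
        have hieq : i = j + 7 := by omega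
        subst hieq
        have hmmod : (2 ^ (2 * j + 9) - 2 ^ (j + 6)) % 2 ^ (j + 7) = 2 ^ (j + 6) := by
          have hdec : 2 ^ (2 * j + 9) - 2 ^ (j + 6)
              = 2 ^ (j + 7) * (2 ^ (j + 2) - 1) + 2 ^ (j + 6) := by
            have e5 : 2 ^ (j + 7) * 2 ^ (j + 2) = 2 ^ (2 * j + 9) := by
              rw [← pow_add]; congr 1; ring
            have h1le : (1:ℕ) ≤ 2 ^ (j + 2) := Nat.one_le_two_pow
            rw [Nat.mul_sub, e5, mul_one]
            omega
          rw [hdec, Nat.mul_add_mod, Nat.mod_eq_of_lt (by omega)]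
        have h2lt7 : (2:ℕ) < 2 ^ (j + 7) := by omega
        rw [hmmod, hsmod, Nat.mod_eq_of_lt h2lt7] at hcond
        omega
    · rintro ⟨hi1, hi2⟩
      refine ⟨⟨by omega, hi2⟩, ?_⟩
      have hi6 : 2 ^ (j + 6) ≤ 2 ^ i := Nat.pow_le_pow_right (by norm_num) (by omega)
      have hi8 : 2 ^ (j + 8) ≤ 2 ^ i := Nat.pow_le_pow_right (by norm_num) (by omega)
      have hiA : 2 ^ i ≤ 2 ^ (2 * j + 9) := Nat.pow_le_pow_right (by norm_num) (by omega)
      have hsmod : (2 ^ (j + 7) + 2) % 2 ^ i = 2 ^ (j + 7) + 2 :=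
        Nat.mod_eq_of_lt (by omega)
      have hmmod : (2 ^ (2 * j + 9) - 2 ^ (j + 6)) % 2 ^ i = 2 ^ i - 2 ^ (j + 6) := by
        have hdec : 2 ^ (2 * j + 9) - 2 ^ (j + 6)
            = 2 ^ i * (2 ^ (2 * j + 9 - i) - 1) + (2 ^ i - 2 ^ (j + 6)) := by
          have e5 : 2 ^ i * 2 ^ (2 * j + 9 - i) = 2 ^ (2 * j + 9) := by
            rw [← pow_add]; congr 1; omega
          have h1le : (1:ℕ) ≤ 2 ^ (2 * j + 9 - i) := Nat.one_le_two_pow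
          rw [Nat.mul_sub, e5, mul_one]
          omega
        rw [hdec, Nat.mul_add_mod, Nat.mod_eq_of_lt (by omega)]
      rw [hsmod, hmmod]
      omega
  rw [hfilter, Nat.card_Ico]
  omega
end

section
/- For k ≥ 4, let n = (2^{k-1}+1)·2^{k+2} + 3 and r = 2^{k+3} + 3. Then for every j with 1 ≤ j ≤ k−1, 2^{k-j} divides C(n-1-j, r-j). -/
theorem stmt_14 (k n r : ℕ) (hk : 4 ≤ k)
    (hn : n = (2 ^ (k - 1) + 1) * 2 ^ (k + 2) + 3) (hr : r = 2 ^ (k + 3) + 3) :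
    ∀ j, 1 ≤ j → j ≤ k - 1 → 2 ^ (k - j) ∣ Nat.choose (n - 1 - j) (r - j) := by
  intro j hj1 hj2
  haveI : Fact (Nat.Prime 2) := ⟨Nat.prime_two⟩
  subst hn hr
  -- basic power facts
  have hkk : k < 2 ^ k := Nat.lt_two_pow_self
  have e0 : (2:ℕ) ^ k ≤ 2 ^ (k + 2) := Nat.pow_le_pow_right (by norm_num) (by omega)
  have e1 : (2:ℕ) ^ (k + 3) = 2 * 2 ^ (k + 2) := by ring
  have e2 : (2:ℕ) ^ (k + 4) = 4 * 2 ^ (k + 2) := by ring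
  have e3 : (2:ℕ) ^ (k + 4) ≤ 2 ^ (2 * k + 1) :=
    Nat.pow_le_pow_right (by norm_num) (by omega)
  have hA : (2 ^ (k - 1) + 1) * 2 ^ (k + 2) + 3 - 1 - j
      = 2 ^ (2 * k + 1) + 2 ^ (k + 2) + 2 - j := by
    have hpow : (2:ℕ) ^ (k - 1) * 2 ^ (k + 2) = 2 ^ (2 * k + 1) := by
      rw [← pow_add]; congr 1; omega
    rw [add_mul, one_mul, hpow]
    omega
  rw [hA]
  set A : ℕ := 2 ^ (2 * k + 1) + 2 ^ (k + 2) + 2 - j with hAdef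
  set B : ℕ := 2 ^ (k + 3) + 3 - j with hBdef
  have hBA : B ≤ A := by omega
  have hAB : A - B = 2 ^ (2 * k + 1) - 2 ^ (k + 2) - 1 := by omega
  have hcpos : 0 < A.choose B := Nat.choose_pos hBA
  rw [padicValNat_dvd_iff_le (p := 2) (by omega)]
  have hlog : Nat.log 2 A < 2 * k + 2 := by
    apply Nat.log_lt_of_lt_pow (by omega)
    have : (2:ℕ) ^ (2 * k + 2) = 2 * 2 ^ (2 * k + 1) := by ring
    omega
  rw [padicValNat_choose hBA hlog]
  rcases Nat.lt_or_ge j 2 with hj' | hj'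
  · -- j = 1
    obtain rfl : j = 1 := by omega
    have hsub : Finset.Ico 2 (k + 3) ⊆
        (Finset.Ico 1 (2 * k + 2)).filter fun i => 2 ^ i ≤ B % 2 ^ i + (A - B) % 2 ^ i := by
      intro i hi
      simp only [Finset.mem_Ico, Finset.mem_filter] at *
      obtain ⟨h1, h2⟩ := hi
      refine ⟨⟨by omega, by omega⟩, ?_⟩
      have h4i : (4:ℕ) ≤ 2 ^ i := by
        calc (4:ℕ) = 2 ^ 2 := by norm_num
        _ ≤ 2 ^ i := Nat.pow_le_pow_right (by norm_num) h1
      have hq1 : (2:ℕ) ^ (k + 3 - i) * 2 ^ i = 2 ^ (k + 3) := by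
        rw [← pow_add]; congr 1; omega
      have hBmod : B % 2 ^ i = 2 := by
        have : B = 2 + 2 ^ (k + 3 - i) * 2 ^ i := by omega
        rw [this, Nat.add_mul_mod_self_right, Nat.mod_eq_of_lt (by omega)]
      have hq2 : (2:ℕ) ^ (2 * k + 1 - i) * 2 ^ i = 2 ^ (2 * k + 1) := by
        rw [← pow_add]; congr 1; omega
      have hq3 : (2:ℕ) ^ (k + 2 - i) * 2 ^ i = 2 ^ (k + 2) := by
        rw [← pow_add]; congr 1; omega
      have hmul : ((2:ℕ) ^ (2 * k + 1 - i) - 2 ^ (k + 2 - i)) * 2 ^ i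
          = 2 ^ (2 * k + 1) - 2 ^ (k + 2) := by
        rw [Nat.sub_mul, hq2, hq3]
      have hge : 2 ^ i ≤ (2 ^ (2 * k + 1 - i) - 2 ^ (k + 2 - i)) * 2 ^ i := by
        apply Nat.le_mul_of_pos_left
        have : (2:ℕ) ^ (k + 2 - i) < 2 ^ (2 * k + 1 - i) :=
          Nat.pow_lt_pow_right one_lt_two (by omega)
        omega
      rw [hmul] at hge
      have hmul2 : ((2:ℕ) ^ (2 * k + 1 - i) - 2 ^ (k + 2 - i) - 1) * 2 ^ i
          = 2 ^ (2 * k + 1) - 2 ^ (k + 2) - 2 ^ i := by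
        rw [Nat.sub_mul, hmul, one_mul]
      have hmmod : (A - B) % 2 ^ i = 2 ^ i - 1 := by
        have hsplit : A - B = (2 ^ i - 1)
            + (2 ^ (2 * k + 1 - i) - 2 ^ (k + 2 - i) - 1) * 2 ^ i := by
          rw [hmul2]; omega
        rw [hsplit, Nat.add_mul_mod_self_right, Nat.mod_eq_of_lt (by omega)]
      rw [hBmod, hmmod]
      omega
    calc k - 1 ≤ (Finset.Ico 2 (k + 3)).card := by rw [Nat.card_Ico]; omega
      _ ≤ _ := Finset.card_le_card hsub
  · -- 2 ≤ j
    have hsub : Finset.Ico (k + 4) (2 * k + 2) ⊆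
        (Finset.Ico 1 (2 * k + 2)).filter fun i => 2 ^ i ≤ B % 2 ^ i + (A - B) % 2 ^ i := by
      intro i hi
      simp only [Finset.mem_Ico, Finset.mem_filter] at *
      obtain ⟨h1, h2⟩ := hi
      refine ⟨⟨by omega, h2⟩, ?_⟩
      have hik : (2:ℕ) ^ (k + 4) ≤ 2 ^ i := Nat.pow_le_pow_right (by norm_num) h1
      have hBmod : B % 2 ^ i = B := Nat.mod_eq_of_lt (by omega)
      have hq2 : (2:ℕ) ^ (2 * k + 1 - i) * 2 ^ i = 2 ^ (2 * k + 1) := by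
        rw [← pow_add]; congr 1; omega
      have h1le : (1:ℕ) ≤ 2 ^ (2 * k + 1 - i) := Nat.one_le_two_pow
      have hmul : ((2:ℕ) ^ (2 * k + 1 - i) - 1) * 2 ^ i = 2 ^ (2 * k + 1) - 2 ^ i := by
        rw [Nat.sub_mul, hq2, one_mul]
      have h2ile : (2:ℕ) ^ i ≤ 2 ^ (2 * k + 1) := Nat.pow_le_pow_right (by norm_num) (by omega)
      have hmmod : (A - B) % 2 ^ i = 2 ^ i - 2 ^ (k + 2) - 1 := by
        have hsplit : A - B = (2 ^ i - 2 ^ (k + 2) - 1)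
            + (2 ^ (2 * k + 1 - i) - 1) * 2 ^ i := by
          rw [hmul]; omega
        rw [hsplit, Nat.add_mul_mod_self_right, Nat.mod_eq_of_lt (by omega)]
      rw [hBmod, hmmod]
      omega
    calc k - j ≤ (Finset.Ico (k + 4) (2 * k + 2)).card := by rw [Nat.card_Ico]; omega
      _ ≤ _ := Finset.card_le_card hsub
end
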